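/- arXiv:1712.08237 — 2 statements merged into one kernel-verified Lean document; each statement's English description precedes it below -/
import Mathlib

section
/- Let ν be a finite signed Borel measure on ℝ satisfying conditions (A1) and (A2), and let D := {y ∈ ℝ : ν({y}) ≠ 0} be its (countable) set of atoms. Then for every x ∈ ℝ the family ((1 − ν({y}))/(1 + ν({y})))_{y ∈ D, y ≤ x} is multipliable (its infinite product converges unconditionally to a nonzero value), and there exist constants 0 < m ≤ M such that m ≤ ∏_{y ∈ D, y ≤ x} (1 − ν({y}))/(1 + ν({y})) ≤ M for every x ∈ ℝ. -/
/-!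
Since `|ν {y}| ≤ |ν| {y}` and the point masses of the finite measure `|ν|` are summable, the
logarithms `log (1 - ν {y}) - log (1 + ν {y})` of the factors are absolutely summable over all
of `ℝ`. Each product is the exponential of the sum of these logarithms over a subset, hence lies
in `[exp (-S), exp S]`, where `S` is the sum of their absolute values.
-/

open MeasureTheory Real

theorem MeasureTheory.summable_measureReal_singleton {α : Type*} [MeasurableSpace α]
    [MeasurableSingletonClass α] (μ : Measure α) [IsFiniteMeasure μ] :
    Summable fun a : α => μ.real {a} := by
  refine ENNReal.summable_toReal (ne_top_of_le_ne_top (measure_ne_top μ Set.univ) ?_)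
  refine tsum_measure_le_measure_univ (fun a => (measurableSet_singleton a).nullMeasurableSet) ?_
  exact fun a b hab => (Set.disjoint_singleton.mpr hab).aedisjoint

theorem Real.one_sub_div_one_add_pos {u : ℝ} (hu : |u| < 1) : 0 < (1 - u) / (1 + u) := by
  obtain ⟨h₁, h₂⟩ := abs_lt.mp hu
  exact div_pos (by linarith) (by linarith)

theorem Real.summable_log_one_sub_div_one_add {ι : Type*} {a : ι → ℝ} (ha : Summable a)
    (ha₁ : ∀ i, |a i| < 1) : Summable fun i => log ((1 - a i) / (1 + a i)) := by
  have hsub : Summable fun i => log (1 + -a i) := summable_log_one_add_of_summable ha.neg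
  refine (hsub.sub (summable_log_one_add_of_summable ha)).congr fun i => ?_
  obtain ⟨h₁, h₂⟩ := abs_lt.mp (ha₁ i)
  rw [log_div (by linarith) (by linarith), sub_eq_add_neg 1]

theorem Real.tprod_subtype_mem_Icc_exp {ι : Type*} {f : ι → ℝ} (hf : ∀ i, 0 < f i)
    (hlog : Summable fun i => log (f i)) (p : ι → Prop) :
    ∏' i : {i // p i}, f i ∈
      Set.Icc (exp (-∑' i, |log (f i)|)) (exp (∑' i, |log (f i)|)) := by
  have hlog_p : Summable fun i : {i // p i} => log (f i) :=
    hlog.comp_injective Subtype.val_injective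
  rw [← rexp_tsum_eq_tprod (f := fun i : {i // p i} => f i) (fun i => hf i) hlog_p]
  have hbound : |∑' i : {i // p i}, log (f i)| ≤ ∑' i, |log (f i)| :=
    calc |∑' i : {i // p i}, log (f i)| ≤ ∑' i : {i // p i}, |log (f i)| := by
          exact norm_tsum_le_tsum_norm (f := fun i : {i // p i} => log (f i)) hlog_p.norm
      _ ≤ ∑' i, |log (f i)| := hlog_p.abs.tsum_le_tsum_of_inj Subtype.val Subtype.val_injective
          (fun _ _ => abs_nonneg _) (fun _ => le_rfl) hlog.abs
  obtain ⟨hlo, hhi⟩ := abs_le.mp hbound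
  exact ⟨exp_le_exp.mpr hlo, exp_le_exp.mpr hhi⟩

/-- Let ν be a finite signed Borel measure on ℝ satisfying (A1)
(|ν|({a}) < 1 for all a; condition (A2) holds automatically since a signed measure
is finite) and let D := {y : ν({y}) ≠ 0} be its set of atoms. Then for every x ∈ ℝ
the family ((1 − ν({y}))/(1 + ν({y})))_{y ∈ D, y ≤ x} is multipliable with nonzero
product, and there exist constants 0 < m ≤ M bounding all these products. -/
theorem multipliable_and_bounded_products (ν : MeasureTheory.SignedMeasure ℝ)
    (hA1 : ∀ a : ℝ, ν.totalVariation {a} < 1) :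
    (∀ x : ℝ, Multipliable (fun y : {y : ℝ // ν {y} ≠ 0 ∧ y ≤ x} =>
        (1 - ν {(y : ℝ)}) / (1 + ν {(y : ℝ)}))) ∧
    (∀ x : ℝ, (∏' y : {y : ℝ // ν {y} ≠ 0 ∧ y ≤ x},
        (1 - ν {(y : ℝ)}) / (1 + ν {(y : ℝ)})) ≠ 0) ∧
    (∃ m M : ℝ, 0 < m ∧ m ≤ M ∧ ∀ x : ℝ,
      m ≤ (∏' y : {y : ℝ // ν {y} ≠ 0 ∧ y ≤ x},
            (1 - ν {(y : ℝ)}) / (1 + ν {(y : ℝ)})) ∧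
      (∏' y : {y : ℝ // ν {y} ≠ 0 ∧ y ≤ x},
        (1 - ν {(y : ℝ)}) / (1 + ν {(y : ℝ)})) ≤ M) := by
  have hatom_le (y : ℝ) : |ν {y}| ≤ ν.totalVariation.real {y} := ν.norm_le_totalVariation {y}
  have hatom_lt (y : ℝ) : |ν {y}| < 1 :=
    (hatom_le y).trans_lt (ENNReal.toReal_lt_of_lt_ofReal (by simpa using hA1 y))
  have hsum : Summable fun y : ℝ => ν {y} :=
    (summable_measureReal_singleton _).of_norm_bounded hatom_le
  have hpos (y : ℝ) := one_sub_div_one_add_pos (hatom_lt y)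
  have hlog := summable_log_one_sub_div_one_add hsum hatom_lt
  have hbounds (x : ℝ) := tprod_subtype_mem_Icc_exp hpos hlog (fun y => ν {y} ≠ 0 ∧ y ≤ x)
  set S := ∑' y : ℝ, |log ((1 - ν {y}) / (1 + ν {y}))|
  have hS : 0 ≤ S := tsum_nonneg fun _ => abs_nonneg _
  refine ⟨fun x => multipliable_of_summable_log (fun y => hpos y)
      (hlog.comp_injective Subtype.val_injective),
    fun x => ((exp_pos _).trans_le (hbounds x).1).ne',
    exp (-S), exp S, exp_pos _, exp_le_exp.mpr (by linarith), hbounds⟩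
end

section
/- Let f : ℝ → ℝ be Borel measurable with 0 < m ≤ f(x) ≤ M for all x ∈ ℝ, let F(x) := ∫_0^x f(z) dz (a strictly increasing bijection of ℝ) with inverse F⁻¹, let σ : ℝ → ℝ be Borel measurable, and set σ̃ := (f·σ) ∘ F⁻¹. Then the sets of local integrability of the inverse square transform as I_{σ̃} = F(I_σ), i.e., a point a ∈ ℝ admits an open neighborhood O with ∫_O σ(y)^{−2} dy < ∞ if and only if F(a) admits an open neighborhood O' with ∫_{O'} σ̃(y)^{−2} dy < ∞. -/
open MeasureTheory
open scoped ENNReal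

/-- Let f : ℝ → ℝ be Borel measurable with 0 < m ≤ f ≤ M, let
F(x) := ∫_0^x f(z) dz (a strictly increasing bijection of ℝ) with inverse F⁻¹,
let σ : ℝ → ℝ be Borel measurable and σ̃ := (f·σ) ∘ F⁻¹. Then I_{σ̃} = F(I_σ):
a point a ∈ ℝ admits an open neighborhood O with ∫_O σ(y)⁻² dy < ∞ (with 1/0 := ∞)
if and only if F(a) admits an open neighborhood O' with ∫_{O'} σ̃(y)⁻² dy < ∞. -/
theorem local_integrability_set_transform
    (f : ℝ → ℝ) (hf : Measurable f) (m M : ℝ) (hm : 0 < m) (hmM : m ≤ M)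
    (hlow : ∀ x, m ≤ f x) (hupp : ∀ x, f x ≤ M)
    (σ : ℝ → ℝ) (hσ : Measurable σ)
    (F : ℝ → ℝ) (hF : ∀ x, F x = ∫ z in (0:ℝ)..x, f z) :
    ∀ a : ℝ,
      (∃ O : Set ℝ, IsOpen O ∧ a ∈ O ∧
        (∫⁻ y in O, (ENNReal.ofReal (σ y ^ 2))⁻¹) < ⊤) ↔
      (∃ O' : Set ℝ, IsOpen O' ∧ F a ∈ O' ∧
        (∫⁻ y in O',
          (ENNReal.ofReal ((f (Function.invFun F y) * σ (Function.invFun F y)) ^ 2))⁻¹) < ⊤) := by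
  have hMpos : 0 < M := hm.trans_le hmM
  -- interval integrability of f
  have hioc : ∀ c d : ℝ, IntegrableOn f (Set.Ioc c d) := by
    intro c d
    refine Measure.integrableOn_of_bounded (M := M) (by simp) hf.aestronglyMeasurable ?_
    filter_upwards with x
    rw [Real.norm_eq_abs, abs_le]
    exact ⟨by linarith [hlow x], hupp x⟩
  have hfint : ∀ c d : ℝ, IntervalIntegrable f volume c d := fun c d => ⟨hioc c d, hioc d c⟩
  have hFsub : ∀ c d : ℝ, F d - F c = ∫ z in c..d, f z := by
    intro c d
    rw [hF, hF]
    exact intervalIntegral.integral_interval_sub_left (hfint 0 d) (hfint 0 c)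
  have hgrow : ∀ c d : ℝ, c ≤ d → m * (d - c) ≤ F d - F c := by
    intro c d hcd
    rw [hFsub c d]
    calc m * (d - c) = ∫ _ in c..d, m := by
          rw [intervalIntegral.integral_const, smul_eq_mul]; ring
      _ ≤ ∫ z in c..d, f z :=
          intervalIntegral.integral_mono_on hcd intervalIntegrable_const (hfint c d)
            (fun x _ => hlow x)
  have hmono : StrictMono F := by
    intro c d hcd
    have := hgrow c d hcd.le
    nlinarith
  have hcont : Continuous F := by
    have h := intervalIntegral.continuous_primitive hfint 0
    have : F = fun b => ∫ z in (0:ℝ)..b, f z := funext hF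
    rw [this]; exact h
  have hF0 : F 0 = 0 := by rw [hF]; simp
  have hsurj : Function.Surjective F := by
    intro y
    have h1 : F (-(|y| / m)) ≤ y := by
      have := hgrow (-(|y| / m)) 0 (neg_nonpos.mpr (by positivity))
      have hmy : m * (|y| / m) = |y| := by field_simp
      have : F (-(|y| / m)) ≤ -|y| := by rw [hF0] at this; nlinarith
      linarith [neg_abs_le y]
    have h2 : y ≤ F (|y| / m) := by
      have := hgrow 0 (|y| / m) (by positivity)
      have hmy : m * (|y| / m) = |y| := by field_simp
      have : |y| ≤ F (|y| / m) := by rw [hF0] at this; nlinarith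
      linarith [le_abs_self y]
    exact intermediate_value_univ (-(|y| / m)) (|y| / m) hcont ⟨h1, h2⟩
  set ψ : ℝ → ℝ := Function.invFun F with hψdef
  have hFψ : ∀ y, F (ψ y) = y := fun y => Function.invFun_eq (hsurj y)
  have hψF : ∀ x, ψ (F x) = x := fun x => Function.leftInverse_invFun hmono.injective x
  -- ψ is continuous via order iso
  set e : ℝ ≃o ℝ := StrictMono.orderIsoOfSurjective F hmono hsurj with hedef
  have heF : ∀ x, e x = F x := fun x => rfl
  have hψe : ψ = ⇑e.symm := by
    funext y
    apply hmono.injective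
    rw [hFψ y, ← heF, e.apply_symm_apply]
  have hψcont : Continuous ψ := by rw [hψe]; exact e.toHomeomorph.symm.continuous
  have hψmeas : Measurable ψ := hψcont.measurable
  have hFopen : IsOpenMap F := by
    have : ⇑e.toHomeomorph = F := funext heF
    rw [← this]; exact e.toHomeomorph.isOpenMap
  -- preimage of Ioc under ψ
  have hpreIoc : ∀ c d : ℝ, ψ ⁻¹' Set.Ioc c d = Set.Ioc (F c) (F d) := by
    intro c d
    ext y
    simp only [Set.mem_preimage, Set.mem_Ioc]
    constructor
    · rintro ⟨h1, h2⟩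
      exact ⟨by simpa [hFψ y] using hmono h1, by simpa [hFψ y] using hmono.monotone h2⟩
    · rintro ⟨h1, h2⟩
      constructor
      · have := hmono.lt_iff_lt (a := c) (b := ψ y)
        rw [hFψ y] at this; exact this.mp h1
      · have := hmono.le_iff_le (a := ψ y) (b := d)
        rw [hFψ y] at this; exact this.mp h2
  -- the mapped measure
  haveI : IsLocallyFiniteMeasure (Measure.map ψ (volume : Measure ℝ)) := by
    constructor
    intro x
    refine ⟨Set.Ioc (x - 1) (x + 1), Ioc_mem_nhds (by linarith) (by linarith), ?_⟩
    rw [Measure.map_apply hψmeas measurableSet_Ioc, hpreIoc]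
    exact measure_Ioc_lt_top
  have hmap : Measure.map ψ (volume : Measure ℝ)
      = (volume : Measure ℝ).withDensity (fun x => ENNReal.ofReal (f x)) := by
    refine Measure.ext_of_Ioc _ _ (fun c d hcd => ?_)
    rw [Measure.map_apply hψmeas measurableSet_Ioc, hpreIoc, Real.volume_Ioc,
      withDensity_apply _ measurableSet_Ioc]
    rw [← ofReal_integral_eq_lintegral_ofReal ((hioc c d).mono_set (subset_refl _))
      (Filter.Eventually.of_forall (fun x => (hm.trans_le (hlow x)).le))]
    congr 1
    rw [hFsub c d, intervalIntegral.integral_of_le hcd.le]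
  -- the two densities
  set G : ℝ → ℝ≥0∞ := fun x => (ENNReal.ofReal ((f x * σ x) ^ 2))⁻¹ with hGdef
  set H : ℝ → ℝ≥0∞ := fun x => (ENNReal.ofReal (σ x ^ 2))⁻¹ with hHdef
  have hGmeas : Measurable G := (((hf.mul hσ).pow_const 2).ennreal_ofReal).inv
  have hHmeas : Measurable H := ((hσ.pow_const 2).ennreal_ofReal).inv
  -- pointwise comparison
  have hpt : ∀ x, ENNReal.ofReal (f x) * G x = ENNReal.ofReal (f x)⁻¹ * H x := by
    intro x
    have hfpos : 0 < f x := hm.trans_le (hlow x)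
    have hne0 : ENNReal.ofReal (f x ^ 2) ≠ 0 :=
      (ENNReal.ofReal_pos.mpr (pow_pos hfpos 2)).ne'
    simp only [hGdef, hHdef]
    rw [mul_pow, ENNReal.ofReal_mul (sq_nonneg _),
      ENNReal.mul_inv (Or.inl hne0) (Or.inl ENNReal.ofReal_ne_top), ← mul_assoc]
    congr 1
    rw [← ENNReal.ofReal_inv_of_pos (pow_pos hfpos 2), ← ENNReal.ofReal_mul hfpos.le]
    congr 1
    rw [sq]
    field_simp
  have hlb : ∀ x, ENNReal.ofReal M⁻¹ * H x ≤ ENNReal.ofReal (f x) * G x := by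
    intro x
    rw [hpt x]
    exact mul_le_mul_left
      (ENNReal.ofReal_le_ofReal
        (inv_anti₀ (hm.trans_le (hlow x)) (hupp x))) _
  have hub : ∀ x, ENNReal.ofReal (f x) * G x ≤ ENNReal.ofReal m⁻¹ * H x := by
    intro x
    rw [hpt x]
    exact mul_le_mul_left
      (ENNReal.ofReal_le_ofReal (inv_anti₀ hm (hlow x))) _
  -- key change of variables
  have key : ∀ O' : Set ℝ, IsOpen O' →
      ((∫⁻ y in O', G (ψ y)) < ⊤ ↔ (∫⁻ x in F ⁻¹' O', H x) < ⊤) := by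
    intro O' hO'
    have hs : MeasurableSet (F ⁻¹' O') := (hO'.preimage hcont).measurableSet
    have hpre : ψ ⁻¹' (F ⁻¹' O') = O' := by
      ext y; simp [Set.mem_preimage, hFψ y]
    have step : (∫⁻ y in O', G (ψ y))
        = ∫⁻ x in F ⁻¹' O', ENNReal.ofReal (f x) * G x := by
      calc (∫⁻ y in O', G (ψ y))
          = ∫⁻ x, G x ∂(Measure.map ψ ((volume : Measure ℝ).restrict O')) := by
            rw [lintegral_map hGmeas hψmeas]
        _ = ∫⁻ x in F ⁻¹' O', G x ∂(Measure.map ψ (volume : Measure ℝ)) := by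
            rw [Measure.restrict_map hψmeas hs, hpre]
        _ = ∫⁻ x in F ⁻¹' O', ENNReal.ofReal (f x) * G x := by
            rw [hmap, restrict_withDensity hs,
              lintegral_withDensity_eq_lintegral_mul _ hf.ennreal_ofReal hGmeas]
            rfl
    rw [step]
    constructor
    · intro h
      by_contra hc
      rw [not_lt, top_le_iff] at hc
      have h1 : ENNReal.ofReal M⁻¹ * ∫⁻ x in F ⁻¹' O', H x
          ≤ ∫⁻ x in F ⁻¹' O', ENNReal.ofReal (f x) * G x := by
        rw [← lintegral_const_mul _ hHmeas]
        exact lintegral_mono fun x => hlb x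
      rw [hc, ENNReal.mul_top (ENNReal.ofReal_pos.mpr (by positivity)).ne'] at h1
      exact absurd (top_le_iff.mp h1) h.ne
    · intro h
      calc (∫⁻ x in F ⁻¹' O', ENNReal.ofReal (f x) * G x)
          ≤ ∫⁻ x in F ⁻¹' O', ENNReal.ofReal m⁻¹ * H x := lintegral_mono fun x => hub x
        _ = ENNReal.ofReal m⁻¹ * ∫⁻ x in F ⁻¹' O', H x := lintegral_const_mul _ hHmeas
        _ < ⊤ := ENNReal.mul_lt_top ENNReal.ofReal_lt_top h
  -- conclude
  intro a
  constructor
  · rintro ⟨O, hOopen, haO, hOint⟩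
    refine ⟨F '' O, hFopen O hOopen, ⟨a, haO, rfl⟩, ?_⟩
    have := (key (F '' O) (hFopen O hOopen)).mpr ?_
    · exact this
    · rw [Set.preimage_image_eq O hmono.injective]
      exact hOint
  · rintro ⟨O', hO'open, hFaO', hint⟩
    exact ⟨F ⁻¹' O', hO'open.preimage hcont, Set.mem_preimage.mpr hFaO',
      (key O' hO'open).mp hint⟩
end
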